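/- arXiv:2208.11309 — 3 statements merged into one kernel-verified Lean document; each statement's English description precedes it below -/
import Mathlib

section
/- Let k ≥ 1 be an integer and M a finite multiset of nonnegative reals. Then Ψ̂_k(M) ≤ k·Ψ̂_1(M)·Ψ̂_{k−1}(M). -/
/-- `hpoly k l` is the complete homogeneous symmetric polynomial of degree `k`
evaluated at the entries of the list `l`, i.e. the sum of all monomials of
total degree `k` in the elements of `l`. -/
noncomputable def hpoly : ℕ → List ℝ → ℝ
  | 0, _ => 1
  | _ + 1, [] => 0
  | k + 1, a :: l => a * hpoly k (a :: l) + hpoly (k + 1) l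
termination_by k l => (k, l.length)

/-- The `k`-order `Ψ̂`-function of a multiset `M` of reals:
`Ψ̂_k(M) = k! ·` (sum of all monomials of total degree `k` in the elements of `M`).
In particular `Ψ̂_0(M) = 1` and `Ψ̂_k(∅) = 0` for `k ≥ 1`. -/
noncomputable def psiHat (k : ℕ) (M : Multiset ℝ) : ℝ :=
  (Nat.factorial k : ℝ) * hpoly k M.toList

lemma hpoly_zero (l : List ℝ) : hpoly 0 l = 1 := by simp [hpoly]

lemma hpoly_nil (k : ℕ) : hpoly (k+1) [] = 0 := by simp [hpoly]

lemma hpoly_cons (k : ℕ) (a : ℝ) (l : List ℝ) :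
    hpoly (k+1) (a :: l) = a * hpoly k (a :: l) + hpoly (k+1) l := by
  rw [hpoly]

lemma hpoly_nonneg : ∀ (k : ℕ) (l : List ℝ), (∀ x ∈ l, 0 ≤ x) → 0 ≤ hpoly k l := by
  intro k
  induction k with
  | zero => intro l _; simp [hpoly_zero]
  | succ k ih =>
    intro l
    induction l with
    | nil => intro _; simp [hpoly_nil]
    | cons a l ihl =>
      intro h
      have ha : 0 ≤ a := h a (by simp)
      have hl : ∀ x ∈ l, 0 ≤ x := fun x hx => h x (by simp [hx])
      have h1 := ih (a :: l) h
      have h2 := ihl hl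
      rw [hpoly_cons]
      positivity

lemma hpoly_le_cons (k : ℕ) (a : ℝ) (l : List ℝ) (ha : 0 ≤ a) (hl : ∀ x ∈ l, 0 ≤ x) :
    hpoly k l ≤ hpoly k (a :: l) := by
  cases k with
  | zero => simp [hpoly_zero]
  | succ k =>
    rw [hpoly_cons]
    have h1 : 0 ≤ hpoly k (a :: l) :=
      hpoly_nonneg k (a :: l) (by intro x hx; rcases List.mem_cons.mp hx with h | h
                                  · exact h ▸ ha
                                  · exact hl x h)
    nlinarith

lemma hpoly_mul (k : ℕ) (l : List ℝ) (hl : ∀ x ∈ l, 0 ≤ x) :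
    hpoly (k+1) l ≤ hpoly 1 l * hpoly k l := by
  induction l with
  | nil => simp [hpoly_nil]
  | cons a l ihl =>
    have ha : 0 ≤ a := hl a (by simp)
    have hl' : ∀ x ∈ l, 0 ≤ x := fun x hx => hl x (by simp [hx])
    have ih := ihl hl'
    have mono := hpoly_le_cons k a l ha hl'
    have h1nn : 0 ≤ hpoly 1 l := hpoly_nonneg 1 l hl'
    rw [hpoly_cons, hpoly_cons 0 a l, hpoly_zero]
    have : hpoly (k+1) l ≤ hpoly 1 l * hpoly k (a :: l) := by
      calc hpoly (k+1) l ≤ hpoly 1 l * hpoly k l := ih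
        _ ≤ hpoly 1 l * hpoly k (a :: l) := by nlinarith
    nlinarith

/-- Lemma 1(b): for `k ≥ 1` and a finite multiset `M` of nonnegative reals,
`Ψ̂_k(M) ≤ k·Ψ̂_1(M)·Ψ̂_{k-1}(M)`. -/
theorem psiHat_le_mul (k : ℕ) (hk : 1 ≤ k) (M : Multiset ℝ) (hM : ∀ x ∈ M, (0:ℝ) ≤ x) :
    psiHat k M ≤ (k : ℝ) * psiHat 1 M * psiHat (k - 1) M := by
  obtain ⟨m, rfl⟩ : ∃ m, k = m + 1 := ⟨k - 1, (Nat.succ_pred_eq_of_pos hk).symm⟩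
  have hl : ∀ x ∈ M.toList, (0:ℝ) ≤ x := fun x hx => hM x (Multiset.mem_toList.mp hx)
  have key := hpoly_mul m M.toList hl
  unfold psiHat
  simp only [Nat.add_sub_cancel, Nat.factorial_one, Nat.factorial_zero, Nat.factorial_succ]
  push_cast
  have hc : (0:ℝ) ≤ ((m:ℝ)+1) * (Nat.factorial m : ℝ) := by positivity
  have h2 := mul_le_mul_of_nonneg_left key hc
  linarith
end

section
/- Let Γ be a weighted congestion game fulfilling Conditions 1–2 and Γ̂ its Ψ̂-game. Then the function Φ̂(S) = ∑_{e∈𝔼} ∑_{k=0}^d (a_{e,k}/(k+1))·Ψ̂_{k+1}(U_e(S)) is an exact potential function of Γ̂, i.e., Φ̂(s'_u, S_{−u}) − Φ̂(s_u, S_{−u}) = ĉ_u(s'_u, S_{−u}) − ĉ_u(s_u, S_{−u}) for every player u, all strategies s_u, s'_u ∈ Σ_u, and every subprofile S_{−u} of the other players' strategies. -/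
/-- A weighted congestion game with `N` players, `E` resources, polynomial latency
functions of degree at most `d` (Condition 2, with coefficient-ratio bound `A`),
and players' weights in `[1, W]` (Condition 1). -/
structure WCGame (N E d : ℕ) (W A : ℝ) where
  /-- the strategy set of each player: a set of nonempty subsets of resources -/
  strat : Fin N → Set (Finset (Fin E))
  strat_nonempty : ∀ u, (strat u).Nonempty
  strat_valid : ∀ u, ∀ s ∈ strat u, s.Nonempty
  /-- the weight of each player -/
  w : Fin N → ℝ
  /-- `a e k` is the coefficient of `x^k` in the latency function of resource `e` -/
  a : Fin E → ℕ → ℝ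
  hd : 1 ≤ d
  hW : 1 ≤ W
  hw_lower : ∀ u, 1 ≤ w u
  hw_upper : ∀ u, w u ≤ W
  ha_nonneg : ∀ e k, 0 ≤ a e k
  ha_pos : ∀ e, 0 < ∑ k ∈ Finset.range (d + 1), a e k
  hA_pos : 0 < A
  hA_bound : ∀ e e' k k', k ≤ d → k' ≤ d → 0 < a e k → a e' k' ≤ A * a e k

namespace WCGame

/-- A (pure strategy) profile: a choice of a set of resources for every player. -/
abbrev Profile (N E : ℕ) := Fin N → Finset (Fin E)

variable {N E d : ℕ} {W A : ℝ}

/-- A profile is feasible if every player uses one of her strategies. -/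
def IsProfile (G : WCGame N E d W A) (S : Profile N E) : Prop :=
  ∀ u, S u ∈ G.strat u

/-- `U_e(S)`: the multiset of weights of the players using resource `e` in profile `S`. -/
noncomputable def load (G : WCGame N E d W A) (S : Profile N E) (e : Fin E) : Multiset ℝ :=
  (Finset.univ.filter (fun u => e ∈ S u)).val.map G.w

/-- The cost `c_u(S) = w_u · ∑_{e ∈ s_u} ∑_{k=0}^d a_{e,k} · L(U_e(S))^k` of player `u`
in the original game `Γ`. -/
noncomputable def cost (G : WCGame N E d W A) (S : Profile N E) (u : Fin N) : ℝ :=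
  G.w u * ∑ e ∈ S u, ∑ k ∈ Finset.range (d + 1), G.a e k * (G.load S e).sum ^ k

/-- The cost `ĉ_u(S) = w_u · ∑_{e ∈ s_u} ∑_{k=0}^d a_{e,k} · Ψ̂_k(U_e(S))` of player `u`
in the `Ψ̂`-game `Γ̂`. -/
noncomputable def hcost (G : WCGame N E d W A) (S : Profile N E) (u : Fin N) : ℝ :=
  G.w u * ∑ e ∈ S u, ∑ k ∈ Finset.range (d + 1), G.a e k * psiHat k (G.load S e)

/-- The potential function `Φ̂(S) = ∑_e ∑_{k=0}^d (a_{e,k}/(k+1)) · Ψ̂_{k+1}(U_e(S))`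
of the `Ψ̂`-game. -/
noncomputable def potHat (G : WCGame N E d W A) (S : Profile N E) : ℝ :=
  ∑ e : Fin E, ∑ k ∈ Finset.range (d + 1),
    G.a e k / ((k : ℝ) + 1) * psiHat (k + 1) (G.load S e)

/-- The approximate potential function `Φ(S) = ∑_e Ψ_e(L(U_e(S)))` with
`Ψ_e(x) = a_{e,0}·x + ∑_{k=1}^d a_{e,k}·(x^{k+1}/(k+1) + x^k/2)`. -/
noncomputable def pot (G : WCGame N E d W A) (S : Profile N E) : ℝ :=
  ∑ e : Fin E,
    (G.a e 0 * (G.load S e).sum +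
      ∑ k ∈ Finset.Icc 1 d,
        G.a e k * ((G.load S e).sum ^ (k + 1) / ((k : ℝ) + 1) + (G.load S e).sum ^ k / 2))

/-- `S` is a `ρ`-approximate pure Nash equilibrium w.r.t. the player costs `costFn`:
no player can decrease her cost by more than a factor `ρ` by a unilateral deviation. -/
def IsApproxPNE (G : WCGame N E d W A) (costFn : Profile N E → Fin N → ℝ) (ρ : ℝ)
    (S : Profile N E) : Prop :=
  ∀ u, ∀ s' ∈ G.strat u, costFn S u ≤ ρ * costFn (Function.update S u s') u

/-- `sstar u` is a best response of player `u` to `S₋ᵤ` w.r.t. the costs `costFn`. -/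
def IsBestResponses (G : WCGame N E d W A) (costFn : Profile N E → Fin N → ℝ)
    (S : Profile N E) (sstar : Fin N → Finset (Fin E)) : Prop :=
  ∀ u, sstar u ∈ G.strat u ∧
    ∀ s ∈ G.strat u, costFn (Function.update S u (sstar u)) u ≤ costFn (Function.update S u s) u

/-- One step of Algorithm 1 (the `1/(1-ε)` best response dynamic on the `Ψ̂`-game),
moving from profile `S` to profile `S'` by letting the chosen player `ut` (a player with a
`1/(1-ε)`-move of maximum cost reduction) switch to her best response `sstar ut`. -/
def AlgOneStep (G : WCGame N E d W A) (ε : ℝ) (S S' : Profile N E) (ut : Fin N)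
    (sstar : Fin N → Finset (Fin E)) : Prop :=
  G.IsBestResponses G.hcost S sstar ∧
  G.hcost S ut > (1 / (1 - ε)) * G.hcost (Function.update S ut (sstar ut)) ut ∧
  (∀ u, G.hcost S u > (1 / (1 - ε)) * G.hcost (Function.update S u (sstar u)) u →
    G.hcost S ut - G.hcost (Function.update S ut (sstar ut)) ut ≥
      G.hcost S u - G.hcost (Function.update S u (sstar u)) u) ∧
  S' = Function.update S ut (sstar ut)

/-- One step of Algorithm 2 (the refined `ρ/(1-ε)` best response dynamic on `Γ`),
moving from profile `S` to profile `S'` by letting the chosen player `ut` (a player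
maximizing `c_u(S) - ρ·c_u(s_u^*, S₋ᵤ)` among players with `ρ/(1-ε)`-moves) switch to
her best response `sstar ut`. -/
def AlgTwoStep (G : WCGame N E d W A) (ρ ε : ℝ) (S S' : Profile N E) (ut : Fin N)
    (sstar : Fin N → Finset (Fin E)) : Prop :=
  G.IsBestResponses G.cost S sstar ∧
  G.cost S ut > (ρ / (1 - ε)) * G.cost (Function.update S ut (sstar ut)) ut ∧
  (∀ u, G.cost S u > (ρ / (1 - ε)) * G.cost (Function.update S u (sstar u)) u →
    G.cost S ut - ρ * G.cost (Function.update S ut (sstar ut)) ut ≥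
      G.cost S u - ρ * G.cost (Function.update S u (sstar u)) u) ∧
  S' = Function.update S ut (sstar ut)

/-- `c_max`: the maximum cost of a player over all (feasible) profiles in `Γ`. -/
noncomputable def cMax (G : WCGame N E d W A) : ℝ :=
  sSup {x | ∃ S u, G.IsProfile S ∧ x = G.cost S u}

/-- `ĉ_max`: the maximum cost of a player over all (feasible) profiles in `Γ̂`. -/
noncomputable def hcMax (G : WCGame N E d W A) : ℝ :=
  sSup {x | ∃ S u, G.IsProfile S ∧ x = G.hcost S u}

/-- `Φ̂_min`: the minimum of the potential `Φ̂` over all (feasible) profiles. -/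
noncomputable def potHatMin (G : WCGame N E d W A) : ℝ :=
  sInf {x | ∃ S, G.IsProfile S ∧ x = G.potHat S}

/-- `a_min⁺`: the minimum positive coefficient of the latency functions. -/
noncomputable def aMinPos (G : WCGame N E d W A) : ℝ :=
  sInf {x | 0 < x ∧ ∃ e k, k ≤ d ∧ x = G.a e k}

end WCGame


lemma hpoly_succ_cons (k : ℕ) (a : ℝ) (l : List ℝ) :
    hpoly (k + 1) (a :: l) = a * hpoly k (a :: l) + hpoly (k + 1) l := by
  rw [hpoly]

lemma hpoly_succ_cons_sub (k : ℕ) (a b : ℝ) (l : List ℝ) :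
    hpoly (k + 1) (a :: l) - hpoly (k + 1) (b :: l) = (a - b) * hpoly k (a :: b :: l) := by
  induction k with
  | zero => simp only [hpoly_succ_cons, hpoly_zero]; ring
  | succ k ih =>
    rw [hpoly_succ_cons (k + 1) a l, hpoly_succ_cons (k + 1) b l, hpoly_succ_cons k a (b :: l)]
    linear_combination a * ih

lemma hpoly_cons_cons_comm (k : ℕ) (a b : ℝ) (l : List ℝ) :
    hpoly k (a :: b :: l) = hpoly k (b :: a :: l) := by
  induction k with
  | zero => simp only [hpoly_zero]
  | succ k ih =>
    rw [hpoly_succ_cons k a (b :: l), hpoly_succ_cons k b (a :: l)]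
    linear_combination b * ih - hpoly_succ_cons_sub k a b l

lemma hpoly_perm {l₁ l₂ : List ℝ} (h : l₁.Perm l₂) (k : ℕ) : hpoly k l₁ = hpoly k l₂ := by
  induction h generalizing k with
  | nil => rfl
  | cons x _ ih =>
    induction k with
    | zero => simp only [hpoly_zero]
    | succ k ihk => rw [hpoly_succ_cons, hpoly_succ_cons, ihk, ih]
  | swap x y l => exact hpoly_cons_cons_comm k y x l
  | trans _ _ ih₁ ih₂ => rw [ih₁, ih₂]

lemma hpoly_toList_cons (k : ℕ) (a : ℝ) (M : Multiset ℝ) :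
    hpoly k (a ::ₘ M).toList = hpoly k (a :: M.toList) :=
  hpoly_perm (by rw [← Multiset.coe_eq_coe, ← Multiset.cons_coe, Multiset.coe_toList,
    Multiset.coe_toList]) k

lemma psiHat_succ_cons (k : ℕ) (a : ℝ) (M : Multiset ℝ) :
    psiHat (k + 1) (a ::ₘ M) = ((k : ℝ) + 1) * a * psiHat k (a ::ₘ M) + psiHat (k + 1) M := by
  unfold psiHat
  rw [hpoly_toList_cons, hpoly_toList_cons, hpoly_succ_cons]
  push_cast [Nat.factorial_succ]
  ring

lemma sum_div_mul_psiHat_succ_cons (c : ℕ → ℝ) (n : ℕ) (a : ℝ) (M : Multiset ℝ) :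
    ∑ k ∈ Finset.range n, c k / ((k : ℝ) + 1) * psiHat (k + 1) (a ::ₘ M) =
      ∑ k ∈ Finset.range n, c k / ((k : ℝ) + 1) * psiHat (k + 1) M +
        a * ∑ k ∈ Finset.range n, c k * psiHat k (a ::ₘ M) := by
  rw [Finset.mul_sum, ← Finset.sum_add_distrib]
  refine Finset.sum_congr rfl fun k _ => ?_
  rw [psiHat_succ_cons]
  field_simp
  ring

namespace WCGame

variable {N E d : ℕ} {W A : ℝ}

noncomputable def othersLoad (G : WCGame N E d W A) (S : Profile N E) (u : Fin N) (e : Fin E) :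
    Multiset ℝ :=
  (Finset.univ.filter (fun v => v ≠ u ∧ e ∈ S v)).val.map G.w

lemma filter_mem_update (S : Profile N E) (u : Fin N) (s : Finset (Fin E)) (e : Fin E) :
    Finset.univ.filter (fun v => e ∈ Function.update S u s v) =
      if e ∈ s then insert u (Finset.univ.filter (fun v => v ≠ u ∧ e ∈ S v))
      else Finset.univ.filter (fun v => v ≠ u ∧ e ∈ S v) := by
  ext v
  rcases eq_or_ne v u with rfl | hv <;> split_ifs <;> simp [*]

lemma load_update (G : WCGame N E d W A) (S : Profile N E) (u : Fin N) (s : Finset (Fin E))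
    (e : Fin E) :
    G.load (Function.update S u s) e =
      if e ∈ s then G.w u ::ₘ G.othersLoad S u e else G.othersLoad S u e := by
  unfold load othersLoad
  rw [filter_mem_update]
  split_ifs
  · rw [Finset.insert_val_of_notMem (by simp), Multiset.map_cons]
  · rfl

lemma potHat_update (G : WCGame N E d W A) (S : Profile N E) (u : Fin N)
    (s : Finset (Fin E)) :
    G.potHat (Function.update S u s) =
      ∑ e : Fin E, ∑ k ∈ Finset.range (d + 1),
        G.a e k / ((k : ℝ) + 1) * psiHat (k + 1) (G.othersLoad S u e) +
      G.hcost (Function.update S u s) u := by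
  unfold potHat hcost
  rw [Function.update_self, Finset.mul_sum, ← Fintype.sum_extend_by_zero s,
    ← Finset.sum_add_distrib]
  refine Finset.sum_congr rfl fun e _ => ?_
  rw [load_update]
  split_ifs
  · exact sum_div_mul_psiHat_succ_cons ..
  · rw [add_zero]

end WCGame

open WCGame in
theorem potHat_is_exact_potential_general {N E d : ℕ} {W A : ℝ}
    (G : WCGame N E d W A) (u : Fin N) (s s' : Finset (Fin E))
    (S : Profile N E) :
    G.potHat (Function.update S u s') - G.potHat (Function.update S u s) =
      G.hcost (Function.update S u s') u - G.hcost (Function.update S u s) u := by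
  rw [potHat_update, potHat_update]
  ring

open WCGame in
/-- Theorem 1 (first part): `Φ̂` is an exact potential function of the `Ψ̂`-game `Γ̂`:
for every player `u`, all strategies `s, s' ∈ Σ_u` and every subprofile `S₋ᵤ` of the other
players' strategies,
`Φ̂(s', S₋ᵤ) − Φ̂(s, S₋ᵤ) = ĉ_u(s', S₋ᵤ) − ĉ_u(s, S₋ᵤ)`. -/
theorem potHat_is_exact_potential {N E d : ℕ} {W A : ℝ}
    (G : WCGame N E d W A) (u : Fin N) (s s' : Finset (Fin E))
    (hs : s ∈ G.strat u) (hs' : s' ∈ G.strat u)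
    (S : Profile N E) (hS : ∀ v, v ≠ u → S v ∈ G.strat v) :
    G.potHat (Function.update S u s') - G.potHat (Function.update S u s) =
      G.hcost (Function.update S u s') u - G.hcost (Function.update S u s) u :=
  potHat_is_exact_potential_general G u s s' S
end

section
/- Let Γ be a weighted congestion game fulfilling Conditions 1–2, and let Φ(S) = ∑_{e∈𝔼} Ψ_e(L(U_e(S))) where Ψ_e(x) = a_{e,0}·x + ∑_{k=1}^d a_{e,k}·(x^{k+1}/(k+1) + x^k/2). Then for every profile S, Φ(S) ≤ C(S) = ∑_{u∈𝒩} c_u(S). -/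
/-!
Charging each player's cost to the resources she uses gives `C(S) = ∑_e L_e · c_e(L_e)`, so it
suffices to compare `Ψ_e(x)` with `x · c_e(x)` term by term. Since all weights are at least `1`,
every load `x` is `0` or at least `1`; there `x^k ≤ x^{k+1}`, and together with `1/(k+1) ≤ 1/2`
this gives `x^{k+1}/(k+1) + x^k/2 ≤ x^{k+1}`.
-/

theorem Multiset.sum_eq_zero_or_one_le_of_one_le {R : Type*} [Semiring R] [PartialOrder R]
    [IsOrderedRing R] {m : Multiset R} (hm : ∀ x ∈ m, 1 ≤ x) :
    m.sum = 0 ∨ 1 ≤ m.sum := by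
  rcases Multiset.empty_or_exists_mem m with rfl | ⟨x, hx⟩
  · exact .inl Multiset.sum_zero
  · exact .inr ((hm x hx).trans
      (Multiset.single_le_sum (fun y hy => zero_le_one.trans (hm y hy)) x hx))

theorem Finset.sum_mul_sum_mem_eq_sum_sum_filter_mul {ι κ R : Type*} [Fintype ι] [Fintype κ]
    [DecidableEq κ] [NonUnitalNonAssocSemiring R] (S : ι → Finset κ) (w : ι → R) (f : κ → R) :
    ∑ u, w u * ∑ e ∈ S u, f e = ∑ e, (∑ u with e ∈ S u, w u) * f e := by
  simp_rw [Finset.mul_sum, Finset.sum_mul]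
  exact Finset.sum_comm' (by simp)

theorem monomial_potential_le {x : ℝ} (hx : x = 0 ∨ 1 ≤ x) {k : ℕ} (hk : 1 ≤ k) :
    x ^ (k + 1) / ((k : ℝ) + 1) + x ^ k / 2 ≤ x ^ (k + 1) := by
  rcases hx with rfl | hx
  · simp [zero_pow (by omega : k ≠ 0)]
  · have hpow : x ^ k ≤ x ^ (k + 1) := pow_le_pow_right₀ hx k.le_succ
    have hdiv : x ^ (k + 1) / ((k : ℝ) + 1) ≤ x ^ (k + 1) / 2 :=
      div_le_div_of_nonneg_left (by positivity) two_pos (by exact_mod_cast Nat.succ_le_succ hk)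
    linarith

theorem latency_potential_le_mul_latency {d : ℕ} {a : ℕ → ℝ} (ha : ∀ k, 0 ≤ a k) {x : ℝ}
    (hx : x = 0 ∨ 1 ≤ x) :
    a 0 * x + ∑ k ∈ Finset.Icc 1 d, a k * (x ^ (k + 1) / ((k : ℝ) + 1) + x ^ k / 2) ≤
      x * ∑ k ∈ Finset.range (d + 1), a k * x ^ k := by
  have hexpand : x * ∑ k ∈ Finset.range (d + 1), a k * x ^ k =
      a 0 * x + ∑ k ∈ Finset.Icc 1 d, a k * x ^ (k + 1) := by
    rw [Finset.mul_sum, Finset.sum_range_succ', ← Finset.Ico_add_one_right_eq_Icc,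
      Finset.sum_Ico_eq_sum_range, add_tsub_cancel_right, add_comm]
    congr 1
    · ring
    · exact Finset.sum_congr rfl fun k _ => by rw [add_comm 1 k]; ring
  rw [hexpand]
  gcongr with k hk
  · exact ha k
  · exact monomial_potential_le hx (Finset.mem_Icc.mp hk).1

namespace WCGame

variable {N E d : ℕ} {W A : ℝ}

theorem load_sum_eq_zero_or_one_le (G : WCGame N E d W A) (S : Profile N E) (e : Fin E) :
    (G.load S e).sum = 0 ∨ 1 ≤ (G.load S e).sum :=
  Multiset.sum_eq_zero_or_one_le_of_one_le fun _ hx => by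
    obtain ⟨u, -, rfl⟩ := Multiset.mem_map.mp hx
    exact G.hw_lower u

theorem sum_cost_eq_sum_load_mul_latency (G : WCGame N E d W A) (S : Profile N E) :
    ∑ u, G.cost S u =
      ∑ e, (G.load S e).sum * ∑ k ∈ Finset.range (d + 1), G.a e k * (G.load S e).sum ^ k :=
  Finset.sum_mul_sum_mem_eq_sum_sum_filter_mul S G.w _

end WCGame

open WCGame in
theorem pot_le_total_cost_general {N E d : ℕ} {W A : ℝ}
    (G : WCGame N E d W A) (S : Profile N E) :
    G.pot S ≤ ∑ u : Fin N, G.cost S u := by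
  rw [sum_cost_eq_sum_load_mul_latency]
  exact Finset.sum_le_sum fun e _ =>
    latency_potential_le_mul_latency (G.ha_nonneg e) (G.load_sum_eq_zero_or_one_le S e)

open WCGame in
/-- Lemma 6: for every profile `S`, `Φ(S) ≤ C(S) = ∑_u c_u(S)`. -/
theorem pot_le_total_cost {N E d : ℕ} {W A : ℝ}
    (G : WCGame N E d W A) (S : Profile N E) (hS : G.IsProfile S) :
    G.pot S ≤ ∑ u : Fin N, G.cost S u :=
  pot_le_total_cost_general G S
end
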